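/- arXiv:2307.02370 — 6 statements merged into one kernel-verified Lean document; each statement's English description precedes it below -/
import Mathlib

section
/- The balanced quasi-shuffle product ∗_b on ℚ⟨B⟩ is associative. -/
/-- The balanced quasi-shuffle product of two words. -/
noncomputable def bqs : List ℕ → List ℕ → (List ℕ →₀ ℚ)
  | [], w => Finsupp.single w 1
  | u@(_ :: _), [] => Finsupp.single u 1
  | i :: u, j :: v =>
      (bqs u (j :: v)).mapDomain (i :: ·) + (bqs (i :: u) v).mapDomain (j :: ·) +
        (if 1 ≤ i ∧ 1 ≤ j then (bqs u v).mapDomain ((i + j) :: ·) else 0)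
  termination_by u v => u.length + v.length

/-- The bilinear extension of the balanced quasi-shuffle product to all of `ℚ⟨B⟩`. -/
noncomputable def bqsL (f g : List ℕ →₀ ℚ) : List ℕ →₀ ℚ :=
  f.sum fun u a => g.sum fun v b => (a * b) • bqs u v

/-!
The associator `A x y z = (x ∗ y) ∗ z - x ∗ (y ∗ z)` is trilinear and vanishes as soon as one
argument is the empty word, the unit. Unfolding the recursion twice on each side shows that
`A (i x) (j y) (k z)` is a sum of prepended associators of strictly shorter words, so induction on
the total length kills `A` on words, hence everywhere.
-/

open Finsupp

namespace BalancedQuasiShuffle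

noncomputable def prepend (a : ℕ) : (List ℕ →₀ ℚ) →ₗ[ℚ] List ℕ →₀ ℚ :=
  lmapDomain ℚ ℚ (a :: ·)

noncomputable def bqsBilin : (List ℕ →₀ ℚ) →ₗ[ℚ] (List ℕ →₀ ℚ) →ₗ[ℚ] List ℕ →₀ ℚ :=
  lsum ℚ fun u => LinearMap.id.smulRight (linearCombination ℚ (bqs u))

local infixl:70 " ∗_b " => bqsBilin

theorem bqsL_eq_bqsBilin (f g : List ℕ →₀ ℚ) : bqsL f g = f ∗_b g := by
  simp [bqsL, bqsBilin, LinearMap.finsupp_sum_apply, linearCombination_apply, mul_smul, smul_sum]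

theorem prepend_single (a : ℕ) (u : List ℕ) (c : ℚ) :
    prepend a (single u c) = single (a :: u) c := by
  simp [prepend]

theorem single_mul_single (u v : List ℕ) (a b : ℚ) :
    single u a ∗_b single v b = (a * b) • bqs u v := by
  simp [bqsBilin, mul_smul]

theorem single_nil_mul (y : List ℕ →₀ ℚ) : single [] 1 ∗_b y = y := by
  induction y using Finsupp.induction_linear with
  | zero => simp
  | add y y' hy hy' => simp [hy, hy']
  | single v b => simp [single_mul_single, bqs]

theorem mul_single_nil (x : List ℕ →₀ ℚ) : x ∗_b single [] 1 = x := by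
  induction x using Finsupp.induction_linear with
  | zero => simp
  | add x x' hx hx' => simp [hx, hx']
  | single u a => cases u <;> simp [single_mul_single, bqs]

theorem prepend_mul_prepend (i j : ℕ) (x y : List ℕ →₀ ℚ) :
    prepend i x ∗_b prepend j y =
      prepend i (x ∗_b prepend j y) + prepend j (prepend i x ∗_b y) +
        if 1 ≤ i ∧ 1 ≤ j then prepend (i + j) (x ∗_b y) else 0 := by
  induction x using Finsupp.induction_linear with
  | zero => simp
  | add x x' hx hx' => simp only [map_add, LinearMap.add_apply, hx, hx']; split_ifs <;> abel
  | single u a =>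
    induction y using Finsupp.induction_linear with
    | zero => simp
    | add y y' hy hy' => simp only [map_add, hy, hy']; split_ifs <;> abel
    | single v b =>
      simp only [prepend_single, single_mul_single, map_smul]
      rw [bqs]
      simp [prepend, smul_ite]

noncomputable def associator (x y z : List ℕ →₀ ℚ) : List ℕ →₀ ℚ := x ∗_b y ∗_b z - x ∗_b (y ∗_b z)

/-- Both sides expand by `prepend_mul_prepend` twice; the terms of `(i x ∗ j y) ∗ k z` beginning with
`k` recombine into `k ((i x ∗ j y) ∗ z)`, and those of `i x ∗ (j y ∗ k z)` beginning with `i` into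
`i (x ∗ (j y ∗ k z))`. -/
theorem associator_prepend (i j k : ℕ) (x y z : List ℕ →₀ ℚ) :
    associator (prepend i x) (prepend j y) (prepend k z) =
      prepend i (associator x (prepend j y) (prepend k z)) +
      prepend j (associator (prepend i x) y (prepend k z)) +
      prepend k (associator (prepend i x) (prepend j y) z) +
      (if 1 ≤ i ∧ 1 ≤ j then prepend (i + j) (associator x y (prepend k z)) else 0) +
      (if 1 ≤ i ∧ 1 ≤ k then prepend (i + k) (associator x (prepend j y) z) else 0) +
      (if 1 ≤ j ∧ 1 ≤ k then prepend (j + k) (associator (prepend i x) y z) else 0) +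
      (if 1 ≤ i ∧ 1 ≤ j ∧ 1 ≤ k then prepend (i + j + k) (associator x y z) else 0) := by
  by_cases hi : i = 0 <;> by_cases hj : j = 0 <;> by_cases hk : k = 0 <;>
    simp [associator, hi, hj, hk, prepend_mul_prepend, Nat.one_le_iff_ne_zero, add_assoc] <;> abel

theorem associator_single_one_eq_zero :
    ∀ u v w : List ℕ, associator (single u 1) (single v 1) (single w 1) = 0
  | [], v, w => by simp [associator, single_nil_mul]
  | _, [], w => by simp [associator, single_nil_mul, mul_single_nil]
  | _, _, [] => by simp [associator, mul_single_nil]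
  | i :: u, j :: v, k :: w => by
    simp only [← prepend_single, associator_prepend]
    simp only [prepend_single, associator_single_one_eq_zero u (j :: v) (k :: w),
      associator_single_one_eq_zero (i :: u) v (k :: w), associator_single_one_eq_zero (i :: u) (j :: v) w,
      associator_single_one_eq_zero u v (k :: w), associator_single_one_eq_zero u (j :: v) w,
      associator_single_one_eq_zero (i :: u) v w, associator_single_one_eq_zero u v w, map_zero, ite_self,
      add_zero]
  termination_by u v w => u.length + v.length + w.length

theorem bqsBilin_assoc (x y z : List ℕ →₀ ℚ) : x ∗_b y ∗_b z = x ∗_b (y ∗_b z) := by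
  induction x using Finsupp.induction_linear with
  | zero => simp
  | add x x' hx hx' => simp [hx, hx']
  | single u a =>
    induction y using Finsupp.induction_linear with
    | zero => simp
    | add y y' hy hy' => simp [hy, hy']
    | single v b =>
      induction z using Finsupp.induction_linear with
      | zero => simp
      | add z z' hz hz' => simp [hz, hz']
      | single w c =>
        simp only [← smul_single_one _ a, ← smul_single_one _ b, ← smul_single_one _ c, map_smul,
          LinearMap.smul_apply]
        rw [← sub_eq_zero.mp (associator_single_one_eq_zero u v w)]

end BalancedQuasiShuffle

open BalancedQuasiShuffle in
/-- The balanced quasi-shuffle product on `ℚ⟨B⟩` is associative. -/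
theorem stmt_5 (f g h : List ℕ →₀ ℚ) : bqsL (bqsL f g) h = bqsL f (bqsL g h) := by
  simp only [bqsL_eq_bqsBilin, bqsBilin_assoc]
end

section
/- Under the duality pairing (Φ | w) = coefficient of the word w in the noncommutative power series Φ, the coproduct Δ_b with Δ_b(b_i) = 1 ⊗ b_i + b_i ⊗ 1 + ∑_{j=1}^{i-1} b_j ⊗ b_{i-j}, extended multiplicatively with respect to concatenation, satisfies (Δ_b(Φ) | u ⊗ v) = (Φ | u ∗_b v) for all power series Φ and all words u, v. -/
/-- Concatenation product on `ℚ⟨B⟩ ⊗ ℚ⟨B⟩`, with tensors of words modeled as pairs. -/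
noncomputable def cmul (f g : (List ℕ × List ℕ) →₀ ℚ) : (List ℕ × List ℕ) →₀ ℚ :=
  f.sum fun p a => g.sum fun q b =>
    (a * b) • Finsupp.single (p.1 ++ q.1, p.2 ++ q.2) 1

/-- `Δ_b(b_i) = 1 ⊗ b_i + b_i ⊗ 1 + ∑_{j=1}^{i-1} b_j ⊗ b_{i-j}`. -/
noncomputable def deltabLetter (i : ℕ) : (List ℕ × List ℕ) →₀ ℚ :=
  Finsupp.single ([], [i]) 1 + Finsupp.single ([i], []) 1 +
    ∑ j ∈ Finset.Ico 1 i, Finsupp.single ([j], [i - j]) 1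

/-- `Δ_b` on a word, extended multiplicatively with respect to concatenation. -/
noncomputable def deltab (w : List ℕ) : (List ℕ × List ℕ) →₀ ℚ :=
  (w.map deltabLetter).foldr cmul (Finsupp.single ([], []) 1)

/-! Both sides are computed by peeling off the first letter `k` of `w`. In `Δ_b(b_k w)`, the
letter `b_k` goes to the left factor, to the right factor, or splits as `b_j ⊗ b_{k-j}`; in
`u ∗_b v`, the first letter of `k w` is the first letter of `u`, of `v`, or the merged letter
`b_{i+j}` of their first letters `b_i, b_j`. The two recursions agree term by term, so induction
on `w` identifies the coefficient of `u ⊗ v` in `Δ_b(w)` with that of `w` in `u ∗_b v`. -/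

open Function

theorem Finsupp.mapDomain_apply_eq_ite {α β M : Type*} [AddCommMonoid M] {f : α → β}
    {g : β → α} (hgf : LeftInverse g f) (x : α →₀ M) (b : β) [Decidable (f (g b) = b)] :
    x.mapDomain f b = if f (g b) = b then x (g b) else 0 := by
  split_ifs with h
  · rw [← h, mapDomain_apply hgf.injective, hgf]
  · exact mapDomain_of_notMem_range _ _ fun ⟨a, ha⟩ => h (by rw [← ha, hgf])

theorem List.cons_tail_eq_self_iff {α : Type*} (a : α) (l : List α) :
    a :: l.tail = l ↔ l.head? = some a := by
  cases l <;> simp [eq_comm]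

theorem Finsupp.mapDomain_cons_apply {α M : Type*} [AddCommMonoid M] [DecidableEq α] (a : α)
    (x : List α →₀ M) (l : List α) :
    x.mapDomain (a :: ·) l = if l.head? = Option.some a then x l.tail else 0 := by
  rw [mapDomain_apply_eq_ite (f := (a :: ·)) (g := List.tail) fun _ => rfl]
  simp only [List.cons_tail_eq_self_iff]

theorem Finset.sum_Ico_ite_eq_sub {M : Type*} [AddCommMonoid M] (i j k : ℕ) (c : M) :
    (∑ l ∈ Finset.Ico 1 k, if i = l ∧ j = k - l then c else 0) =
      if 1 ≤ i ∧ 1 ≤ j ∧ k = i + j then c else 0 := by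
  have hsplit : ∀ l, (if i = l ∧ j = k - l then c else 0) =
      if i = l then (if j = k - i then c else 0) else 0 := by
    intro l
    by_cases h : i = l <;> simp [h]
  simp only [hsplit, Finset.sum_ite_eq, Finset.mem_Ico]
  split_ifs <;> first | rfl | omega

theorem Finsupp.sum_smul_eq_sum_smul {α S M : Type*} [Semiring S] [AddCommMonoid M] [Module S M]
    (f : α →₀ S) (g : α →₀ M) :
    (g.sum fun a m => f a • m) = f.sum fun a s => s • g a := by
  classical
  rw [sum_of_support_subset g Finset.subset_union_left _ (by simp),
    sum_of_support_subset f Finset.subset_union_right _ (by simp)]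

theorem cmul_add_left (f₁ f₂ g : (List ℕ × List ℕ) →₀ ℚ) :
    cmul (f₁ + f₂) g = cmul f₁ g + cmul f₂ g :=
  Finsupp.sum_add_index' (by simp) fun _ _ _ => by simp only [add_mul, add_smul, Finsupp.sum_add]

theorem cmul_sum_left {ι : Type*} (s : Finset ι) (f : ι → (List ℕ × List ℕ) →₀ ℚ)
    (g : (List ℕ × List ℕ) →₀ ℚ) :
    cmul (∑ i ∈ s, f i) g = ∑ i ∈ s, cmul (f i) g :=
  (Finsupp.sum_finsetSum_index (by simp) fun _ _ _ => by
    simp only [add_mul, add_smul, Finsupp.sum_add]).symm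

theorem cmul_single_left (x y : List ℕ) (g : (List ℕ × List ℕ) →₀ ℚ) :
    cmul (Finsupp.single (x, y) 1) g = g.mapDomain (Prod.map (x ++ ·) (y ++ ·)) := by
  rw [cmul, Finsupp.sum_single_index (by simp), Finsupp.mapDomain]
  simp [Prod.map]

theorem deltab_nil : deltab [] = Finsupp.single ([], []) 1 := rfl

theorem deltab_cons (k : ℕ) (w : List ℕ) :
    deltab (k :: w) =
      (deltab w).mapDomain (Prod.map id (k :: ·)) + (deltab w).mapDomain (Prod.map (k :: ·) id) +
        ∑ j ∈ Finset.Ico 1 k, (deltab w).mapDomain (Prod.map (j :: ·) ((k - j) :: ·)) := by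
  change cmul (deltabLetter k) (deltab w) = _
  simp only [deltabLetter, cmul_add_left, cmul_sum_left, cmul_single_left]
  rfl

theorem deltab_apply_nil (u v : List ℕ) :
    deltab [] (u, v) = if u = [] ∧ v = [] then 1 else 0 := by
  simp [deltab_nil, Finsupp.single_apply, eq_comm]

theorem deltab_apply_cons (k : ℕ) (w u v : List ℕ) :
    deltab (k :: w) (u, v) =
      (if u.head? = some k then deltab w (u.tail, v) else 0) +
        (if v.head? = some k then deltab w (u, v.tail) else 0) +
        ∑ j ∈ Finset.Ico 1 k,
          if u.head? = some j ∧ v.head? = some (k - j) then deltab w (u.tail, v.tail) else 0 := by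
  have id_id : LeftInverse (id : List ℕ → List ℕ) id := fun _ => rfl
  have tail_cons : ∀ a : ℕ, LeftInverse List.tail (a :: ·) := fun _ _ => rfl
  rw [deltab_cons, Finsupp.add_apply, Finsupp.add_apply, Finsupp.finsetSum_apply,
    Finsupp.mapDomain_apply_eq_ite (id_id.prodMap (tail_cons k)),
    Finsupp.mapDomain_apply_eq_ite ((tail_cons k).prodMap id_id), add_comm (ite _ _ _)]
  congr 1
  · simp [List.cons_tail_eq_self_iff]
  · refine Finset.sum_congr rfl fun j _ => ?_
    rw [Finsupp.mapDomain_apply_eq_ite ((tail_cons j).prodMap (tail_cons (k - j)))]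
    simp [List.cons_tail_eq_self_iff]

theorem bqs_nil_right (u : List ℕ) : bqs u [] = Finsupp.single u 1 := by
  cases u <;> rw [bqs]

theorem bqs_apply_nil (u v : List ℕ) :
    bqs u v [] = if u = [] ∧ v = [] then 1 else 0 := by
  match u, v with
  | [], v => simp [bqs, Finsupp.single_apply]
  | _ :: _, [] => simp [bqs]
  | _ :: _, _ :: _ =>
    simp [bqs, Finsupp.mapDomain_cons_apply, apply_ite (fun f : List ℕ →₀ ℚ => f [])]

theorem bqs_apply_cons (k : ℕ) (w u v : List ℕ) :
    bqs u v (k :: w) =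
      (if u.head? = some k then bqs u.tail v w else 0) +
        (if v.head? = some k then bqs u v.tail w else 0) +
        ∑ j ∈ Finset.Ico 1 k,
          if u.head? = some j ∧ v.head? = some (k - j) then bqs u.tail v.tail w else 0 := by
  match u, v with
  | [], [] => simp [bqs]
  | [], j :: v => simp [bqs, Finsupp.single_apply, ite_and]
  | i :: u, [] => simp [bqs_nil_right, Finsupp.single_apply, ite_and]
  | i :: u, j :: v =>
    have hboth : (if 1 ≤ i ∧ 1 ≤ j then (bqs u v).mapDomain ((i + j) :: ·) else 0) (k :: w) =
        if 1 ≤ i ∧ 1 ≤ j ∧ k = i + j then bqs u v w else 0 := by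
      by_cases hij : 1 ≤ i ∧ 1 ≤ j <;> simp [hij, ← and_assoc, Finsupp.mapDomain_cons_apply]
    rw [bqs, Finsupp.add_apply, Finsupp.add_apply, hboth]
    simp only [Finsupp.mapDomain_cons_apply, List.head?_cons, List.tail_cons, Option.some.injEq,
      Finset.sum_Ico_ite_eq_sub, eq_comm]

theorem deltab_apply_eq_bqs_apply (w u v : List ℕ) : deltab w (u, v) = bqs u v w := by
  induction w generalizing u v with
  | nil => rw [deltab_apply_nil, bqs_apply_nil]
  | cons k w ih => simp only [deltab_apply_cons, bqs_apply_cons, ih]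

/-- Duality: `(Δ_b(Φ) | u ⊗ v) = (Φ | u ∗_b v)` for a noncommutative polynomial `Φ` with
coefficients in a commutative `ℚ`-algebra `R` and all words `u, v`. -/
theorem stmt_11 (R : Type*) [CommRing R] [Algebra ℚ R] (Φ : List ℕ →₀ R)
    (u v : List ℕ) :
    (Φ.sum fun w c => (deltab w (u, v)) • c) =
      (bqs u v).sum fun w c => c • Φ w := by
  simp only [deltab_apply_eq_bqs_apply]
  exact Finsupp.sum_smul_eq_sum_smul (bqs u v) Φ
end

section
/- The antipode of the Hopf algebra (R⟪B⟫, conc, Δ_b) is the anti-automorphism S determined by S(b₀) = -b₀ and, for a ≥ 1, S(b_a) = ∑_{r=1}^{a} ∑_{j₁+⋯+j_r = a, j_i ≥ 1} (-1)^r b_{j₁} ⋯ b_{j_r}; equivalently, S as given satisfies the antipode identity ∑ S(w_{(1)}) w_{(2)} = ε(w)·1 on generators b_a. -/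
/-!
Splitting off the last block is a bijection between the compositions of `a ≥ 1` other than `[a]`
and the pairs (composition of `j`, block `a - j`) with `1 ≤ j < a`. Each such composition has one
more block than its prefix, hence the opposite sign, so `S(b_a) = -b_a - ∑_{j=1}^{a-1} S(b_j) b_{a-j}`,
which is the antipode identity.
-/

open Finset

noncomputable def compBlocks (n : ℕ) : Finset (List ℕ) :=
  univ.image (Composition.blocks (n := n))

lemma mem_compBlocks {n : ℕ} {l : List ℕ} :
    l ∈ compBlocks n ↔ (∀ i ∈ l, 0 < i) ∧ l.sum = n := by
  simp only [compBlocks, mem_image, mem_univ, true_and]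
  constructor
  · rintro ⟨c, rfl⟩
    exact ⟨fun i hi => c.blocks_pos hi, c.blocks_sum⟩
  · rintro ⟨hpos, hsum⟩
    exact ⟨⟨l, hpos _, hsum⟩, rfl⟩

lemma sum_composition_eq_sum_compBlocks {M : Type*} [AddCommMonoid M] (n : ℕ) (f : List ℕ → M) :
    ∑ c : Composition n, f c.blocks = ∑ l ∈ compBlocks n, f l :=
  (sum_image fun _ _ _ _ h => Composition.ext h).symm

lemma append_singleton_mem_compBlocks {a j : ℕ} {m : List ℕ} (hm : m ∈ compBlocks j)
    (hja : j < a) : m ++ [a - j] ∈ compBlocks a := by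
  obtain ⟨hpos, hsum⟩ := mem_compBlocks.1 hm
  refine mem_compBlocks.2 ⟨fun i hi => ?_, by simp [hsum]; omega⟩
  rcases List.mem_append.1 hi with hi | hi
  · exact hpos i hi
  · rw [List.mem_singleton.1 hi]; omega

def appendLastBlock (a j : ℕ) : List ℕ ↪ List ℕ :=
  ⟨(· ++ [a - j]), List.append_left_injective _⟩

lemma compBlocks_eq_insert_biUnion {a : ℕ} (ha : a ≠ 0) :
    compBlocks a =
      insert [a] ((Ico 1 a).biUnion fun j => (compBlocks j).map (appendLastBlock a j)) := by
  ext l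
  simp only [mem_insert, mem_biUnion, mem_Ico, mem_map, appendLastBlock,
    Function.Embedding.coeFn_mk]
  constructor
  · intro hl
    obtain ⟨hpos, hsum⟩ := mem_compBlocks.1 hl
    rcases l.eq_nil_or_concat' with rfl | ⟨m, x, rfl⟩
    · exact absurd hsum.symm (by simpa using ha)
    rcases eq_or_ne m [] with rfl | hm
    · left; simpa using hsum
    · right
      have hmpos : 0 < m.sum := m.sum_pos (fun i hi => hpos i (by simp [hi])) hm
      have hxpos : 0 < x := hpos x (by simp)
      simp only [List.sum_append, List.sum_singleton] at hsum
      refine ⟨m.sum, ⟨hmpos, by omega⟩, m, ?_, by congr 2; omega⟩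
      exact mem_compBlocks.2 ⟨fun i hi => hpos i (by simp [hi]), rfl⟩
  · rintro (rfl | ⟨j, ⟨-, hja⟩, m, hm, rfl⟩)
    · exact mem_compBlocks.2 ⟨by simpa using Nat.pos_of_ne_zero ha, by simp⟩
    · exact append_singleton_mem_compBlocks hm hja

lemma sum_compBlocks_eq_add_sum_lastBlock {M : Type*} [AddCommMonoid M] {a : ℕ} (ha : a ≠ 0)
    (f : List ℕ → M) :
    ∑ l ∈ compBlocks a, f l = f [a] + ∑ j ∈ Ico 1 a, ∑ m ∈ compBlocks j, f (m ++ [a - j]) := by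
  have hnotMem : [a] ∉ (Ico 1 a).biUnion fun j => (compBlocks j).map (appendLastBlock a j) := by
    simp only [mem_biUnion, mem_Ico, mem_map, appendLastBlock, Function.Embedding.coeFn_mk,
      not_exists, not_and]
    intro j hj m hm hml
    have hnil : m = [] := by simpa using congrArg List.length hml
    have hj0 : j = 0 := by simpa [hnil] using (mem_compBlocks.1 hm).2.symm
    omega
  -- the prefix `m` determines `j = m.sum`
  have hdisj : (Ico 1 a : Set ℕ).PairwiseDisjoint
      fun j => (compBlocks j).map (appendLastBlock a j) := by
    intro j₁ _ j₂ _ hne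
    refine disjoint_left.2 fun l hl₁ hl₂ => hne ?_
    obtain ⟨m₁, hm₁, rfl⟩ := mem_map.1 hl₁
    obtain ⟨m₂, hm₂, hm⟩ := mem_map.1 hl₂
    obtain rfl := (List.append_inj' hm rfl).1
    exact (mem_compBlocks.1 hm₁).2.symm.trans (mem_compBlocks.1 hm₂).2
  rw [compBlocks_eq_insert_biUnion ha, sum_insert hnotMem, sum_biUnion hdisj]
  simp only [sum_map, appendLastBlock, Function.Embedding.coeFn_mk]

/-- The antipode on the generator `b_a`: `S(b₀) = -b₀` and, for `a ≥ 1`,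
`S(b_a) = ∑_{r=1}^a ∑_{j₁+⋯+j_r=a, j_i ≥ 1} (-1)^r b_{j₁}⋯b_{j_r}`
(the inner data is exactly a composition of `a`). -/
noncomputable def Sb (a : ℕ) : List ℕ →₀ ℚ :=
  if a = 0 then -Finsupp.single [0] 1
  else ∑ c : Composition a, ((-1 : ℚ)) ^ c.length • Finsupp.single c.blocks 1

noncomputable def signedWord (l : List ℕ) : List ℕ →₀ ℚ :=
  (-1 : ℚ) ^ l.length • Finsupp.single l 1

lemma signedWord_append_singleton (m : List ℕ) (x : ℕ) :
    signedWord (m ++ [x]) = -(signedWord m).mapDomain (· ++ [x]) := by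
  simp [signedWord, Finsupp.mapDomain_single, pow_succ]

lemma Sb_eq_sum_signedWord {a : ℕ} (ha : a ≠ 0) :
    Sb a = ∑ l ∈ compBlocks a, signedWord l := by
  rw [Sb, if_neg ha]
  exact sum_composition_eq_sum_compBlocks a signedWord

lemma Sb_eq_neg_single_sub_sum {a : ℕ} (ha : a ≠ 0) :
    Sb a = -Finsupp.single [a] 1 -
      ∑ j ∈ Ico 1 a, (Sb j).mapDomain (· ++ [a - j]) := by
  have hprefix : ∀ j ∈ Ico 1 a, ∑ m ∈ compBlocks j, signedWord (m ++ [a - j]) =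
      -(Sb j).mapDomain (· ++ [a - j]) := by
    intro j hj
    rw [Sb_eq_sum_signedWord (by simp at hj; omega), Finsupp.mapDomain_finsetSum,
      ← sum_neg_distrib]
    exact sum_congr rfl fun m _ => signedWord_append_singleton m (a - j)
  rw [Sb_eq_sum_signedWord ha, sum_compBlocks_eq_add_sum_lastBlock ha, sum_congr rfl hprefix,
    sum_neg_distrib, sub_eq_add_neg]
  simp [signedWord]

/-- `S` as above satisfies the antipode identity `conc ∘ (S ⊗ id) ∘ Δ_b (b_a) = ε(b_a)·1 = 0`
on every generator `b_a` (including `a = 0`): here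
`Δ_b(b_a) = 1 ⊗ b_a + b_a ⊗ 1 + ∑_{j=1}^{a-1} b_j ⊗ b_{a-j}`, so the identity reads
`b_a + S(b_a) + ∑_{j=1}^{a-1} S(b_j)·b_{a-j} = 0`, where `·` is concatenation. -/
theorem stmt_13 (a : ℕ) :
    Finsupp.single [a] (1 : ℚ) + Sb a +
      ∑ j ∈ Finset.Ico 1 a, (Sb j).mapDomain (fun w => w ++ [a - j]) = 0 := by
  rcases eq_or_ne a 0 with rfl | ha
  · simp [Sb]
  · rw [Sb_eq_neg_single_sub_sum ha]
    abel
end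

section
/- The ℚ-linear map ℚ⟨B⟩ → ℚ⟨X⟩ sending b₀ ↦ x₀, b₁ ↦ x₁, and b_i ↦ 0 for i ≥ 2 (extended to words multiplicatively on letters, so a word maps to the corresponding word if all its letters are b₀ or b₁, and to 0 otherwise) is a surjective algebra morphism from (ℚ⟨B⟩, ∗_b) to (ℚ⟨X⟩, ⧢), where ⧢ is the shuffle product. -/
/-- The shuffle product of two words (used on `ℚ⟨X⟩`, modeled by words with letters `≤ 1`,
identifying `x₀ = 0`, `x₁ = 1`). -/
noncomputable def sh : List ℕ → List ℕ → (List ℕ →₀ ℚ)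
  | [], w => Finsupp.single w 1
  | u@(_ :: _), [] => Finsupp.single u 1
  | i :: u, j :: v =>
      (sh u (j :: v)).mapDomain (i :: ·) + (sh (i :: u) v).mapDomain (j :: ·)
  termination_by u v => u.length + v.length

/-- The bilinear extension of the shuffle product. -/
noncomputable def shL (f g : List ℕ →₀ ℚ) : List ℕ →₀ ℚ :=
  f.sum fun u a => g.sum fun v b => (a * b) • sh u v

/-- The map `ℚ⟨B⟩ → ℚ⟨X⟩`: `b₀ ↦ x₀`, `b₁ ↦ x₁`, `b_i ↦ 0` for `i ≥ 2`, extended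
letterwise to words. -/
noncomputable def phiX (w : List ℕ) : List ℕ →₀ ℚ :=
  if ∀ i ∈ w, i ≤ 1 then Finsupp.single w 1 else 0

/-!
Write `φ` for the linear extension of `phiX`. It kills every word containing a letter `b_k` with
`k ≥ 2`, and commutes with prepending a letter `b_0` or `b_1`. In the recursion for `b_i u ∗_b b_j v`
the third term starts with the merged letter `b_{i+j}`, where `i + j ≥ 2`, so `φ` kills it, and the
first two terms are mapped to the two terms of the shuffle recursion. Induction on `|u| + |v|` then
gives `φ (u ∗_b v) = φ u ⧢ φ v`. Surjectivity holds because `φ` is the identity on words over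
`{b_0, b_1}`.
-/

open Finsupp

lemma phiX_cons (i : ℕ) (w : List ℕ) :
    phiX (i :: w) = if i ≤ 1 then (phiX w).mapDomain (i :: ·) else 0 := by
  unfold phiX
  split_ifs <;> simp_all [mapDomain_single]

lemma linearCombination_phiX_mapDomain_cons (i : ℕ) (f : List ℕ →₀ ℚ) :
    linearCombination ℚ phiX (f.mapDomain (i :: ·)) =
      if i ≤ 1 then (linearCombination ℚ phiX f).mapDomain (i :: ·) else 0 := by
  rw [linearCombination_mapDomain]
  split_ifs with hi
  · rw [← lmapDomain_apply ℚ ℚ, apply_linearCombination]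
    exact congrArg (linearCombination ℚ · f) (funext fun w => by simp [phiX_cons, hi])
  · have h_kill : phiX ∘ (i :: ·) = 0 := funext fun w => by simp [phiX_cons, hi]
    rw [h_kill, linearCombination_zero, LinearMap.zero_apply]

lemma shL_phiX (u v : List ℕ) :
    shL (phiX u) (phiX v) =
      if (∀ i ∈ u, i ≤ 1) ∧ (∀ i ∈ v, i ≤ 1) then sh u v else 0 := by
  unfold phiX
  split_ifs <;> simp_all [shL]

theorem linearCombination_phiX_bqs : ∀ u v : List ℕ,
    linearCombination ℚ phiX (bqs u v) = shL (phiX u) (phiX v)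
  | [], v => by
    rw [bqs, linearCombination_single, one_smul, shL_phiX]
    simp [phiX, sh]
  | i :: u, [] => by
    rw [bqs, linearCombination_single, one_smul, shL_phiX]
    simp [phiX, sh]
  | i :: u, j :: v => by
    -- the merged letter `b_{i+j}` has index `≥ 2`, so `φ` kills this term
    have h_merge : linearCombination ℚ phiX
        (if 1 ≤ i ∧ 1 ≤ j then (bqs u v).mapDomain ((i + j) :: ·) else 0) = 0 := by
      split_ifs
      · rw [linearCombination_phiX_mapDomain_cons, if_neg (by omega)]
      · exact map_zero _
    rw [bqs, map_add, map_add, h_merge, add_zero, linearCombination_phiX_mapDomain_cons,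
      linearCombination_phiX_mapDomain_cons, linearCombination_phiX_bqs u (j :: v),
      linearCombination_phiX_bqs (i :: u) v, shL_phiX, shL_phiX, shL_phiX, sh]
    simp only [List.forall_mem_cons]
    split_ifs <;> simp_all
  termination_by u v => u.length + v.length

lemma linearCombination_phiX_of_forall_le_one {g : List ℕ →₀ ℚ}
    (hg : ∀ w ∈ g.support, ∀ i ∈ w, i ≤ 1) : linearCombination ℚ phiX g = g := by
  conv_rhs => rw [← g.sum_single]
  rw [linearCombination_apply]
  exact sum_congr fun w hw => by simp only [phiX, if_pos (hg w hw), smul_single_one]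

/-- The map `b₀ ↦ x₀, b₁ ↦ x₁, b_i ↦ 0 (i ≥ 2)` is a surjective algebra morphism
`(ℚ⟨B⟩, ∗_b) → (ℚ⟨X⟩, ⧢)`. -/
theorem stmt_14 :
    (∀ u v : List ℕ, ((bqs u v).sum fun w a => a • phiX w) = shL (phiX u) (phiX v)) ∧
    (∀ g : List ℕ →₀ ℚ, (∀ w ∈ g.support, ∀ i ∈ w, i ≤ 1) →
      ∃ f : List ℕ →₀ ℚ, (f.sum fun w a => a • phiX w) = g) :=
  ⟨linearCombination_phiX_bqs, fun _ hg => ⟨_, linearCombination_phiX_of_forall_le_one hg⟩⟩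
end

section
/- The ℚ-linear map ℚ⟨B⟩ → ℚ⟨Y⟩ sending b₀ ↦ 0 and b_i ↦ y_i for i ≥ 1 (extended letterwise on words: a word maps to the corresponding word in the y's if it contains no b₀, and to 0 otherwise) is a surjective algebra morphism from (ℚ⟨B⟩, ∗_b) to (ℚ⟨Y⟩, ∗), where ∗ is the stuffle product. -/
/-- The stuffle product of two words (used on `ℚ⟨Y⟩`, modeled by words with letters `≥ 1`,
identifying `y_i` with the letter `i`). -/
noncomputable def st : List ℕ → List ℕ → (List ℕ →₀ ℚ)
  | [], w => Finsupp.single w 1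
  | u@(_ :: _), [] => Finsupp.single u 1
  | i :: u, j :: v =>
      (st u (j :: v)).mapDomain (i :: ·) + (st (i :: u) v).mapDomain (j :: ·) +
        (st u v).mapDomain ((i + j) :: ·)
  termination_by u v => u.length + v.length

/-- The bilinear extension of the stuffle product. -/
noncomputable def stL (f g : List ℕ →₀ ℚ) : List ℕ →₀ ℚ :=
  f.sum fun u a => g.sum fun v b => (a * b) • st u v

/-- The map `ℚ⟨B⟩ → ℚ⟨Y⟩`: `b₀ ↦ 0`, `b_i ↦ y_i` for `i ≥ 1`, extended letterwise. -/
noncomputable def phiY (w : List ℕ) : List ℕ →₀ ℚ :=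
  if 0 ∉ w then Finsupp.single w 1 else 0

/-
On words without the letter `0` the two recursions defining `∗_b` and `∗` coincide, since
the merging condition `1 ≤ i ∧ 1 ≤ j` always holds. Conversely `∗_b` never merges a `0`, so
every word in `u ∗_b v` contains as many `0`s as `u` and `v` together: if `u` or `v` is killed by
the map, so is `u ∗_b v`. Surjectivity holds because the map fixes the zero-free words.
-/

lemma mem_support_mapDomain_cons {α M : Type*} [AddCommMonoid M] {i : α} {f : List α →₀ M}
    {w : List α} (h : w ∈ (f.mapDomain (i :: ·)).support) : ∃ w' ∈ f.support, w = i :: w' := by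
  classical
  rw [Finsupp.mapDomain_support_of_injective (List.cons_injective), Finset.mem_image] at h
  obtain ⟨w', hw', rfl⟩ := h
  exact ⟨w', hw', rfl⟩

lemma bqs_eq_st : ∀ u v : List ℕ, 0 ∉ u → 0 ∉ v → bqs u v = st u v
  | [], w, _, _ => by simp [bqs, st]
  | i :: u, [], _, _ => by simp [bqs, st]
  | i :: u, j :: v, hu, hv => by
    rw [List.mem_cons, not_or] at hu hv
    rw [bqs, st, bqs_eq_st u (j :: v) hu.2 (List.not_mem_cons_of_ne_of_not_mem hv.1 hv.2),
      bqs_eq_st (i :: u) v (List.not_mem_cons_of_ne_of_not_mem hu.1 hu.2) hv.2,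
      bqs_eq_st u v hu.2 hv.2, if_pos ⟨by omega, by omega⟩]
  termination_by u v => u.length + v.length

lemma count_zero_of_mem_support_bqs : ∀ u v w : List ℕ, w ∈ (bqs u v).support →
    w.count 0 = u.count 0 + v.count 0
  | [], v, w, hw | i :: u, [], w, hw => by
    rw [bqs, Finsupp.support_single _ one_ne_zero, Finset.mem_singleton] at hw
    simp [hw]
  | i :: u, j :: v, w, hw => by
    rw [bqs] at hw
    rcases Finset.mem_union.1 (Finsupp.support_add hw) with hw | hw
    · rcases Finset.mem_union.1 (Finsupp.support_add hw) with hw | hw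
      · obtain ⟨w', hw', rfl⟩ := mem_support_mapDomain_cons hw
        simp only [List.count_cons, count_zero_of_mem_support_bqs u (j :: v) w' hw']
        omega
      · obtain ⟨w', hw', rfl⟩ := mem_support_mapDomain_cons hw
        simp only [List.count_cons, count_zero_of_mem_support_bqs (i :: u) v w' hw']
        omega
    · split_ifs at hw with hij
      · obtain ⟨w', hw', rfl⟩ := mem_support_mapDomain_cons hw
        have hi : i ≠ 0 := by omega
        have hj : j ≠ 0 := by omega
        simp [hi, hj, count_zero_of_mem_support_bqs u v w' hw']
      · simp at hw
  termination_by u v => u.length + v.length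

lemma phiY_of_zero_not_mem {w : List ℕ} (h : 0 ∉ w) : phiY w = Finsupp.single w 1 :=
  if_pos h

lemma phiY_of_zero_mem {w : List ℕ} (h : 0 ∈ w) : phiY w = 0 :=
  if_neg (not_not.2 h)

lemma stL_single_one_single_one (u v : List ℕ) :
    stL (Finsupp.single u 1) (Finsupp.single v 1) = st u v := by
  simp [stL, Finsupp.sum_single_index]

lemma sum_smul_phiY_of_zero_free {g : List ℕ →₀ ℚ} (hg : ∀ w ∈ g.support, (0 : ℕ) ∉ w) :
    (g.sum fun w a => a • phiY w) = g := by
  conv_rhs => rw [← Finsupp.sum_single g]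
  refine Finsupp.sum_congr fun w hw => ?_
  rw [phiY_of_zero_not_mem (hg w hw), Finsupp.smul_single_one]

lemma sum_smul_phiY_of_zero_mem {g : List ℕ →₀ ℚ} (hg : ∀ w ∈ g.support, (0 : ℕ) ∈ w) :
    (g.sum fun w a => a • phiY w) = 0 :=
  Finset.sum_eq_zero fun w hw => by simp only [phiY_of_zero_mem (hg w hw), smul_zero]

/-- The map `b₀ ↦ 0, b_i ↦ y_i (i ≥ 1)` is a surjective algebra morphism
`(ℚ⟨B⟩, ∗_b) → (ℚ⟨Y⟩, ∗)`. -/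
theorem stmt_15 :
    (∀ u v : List ℕ, ((bqs u v).sum fun w a => a • phiY w) = stL (phiY u) (phiY v)) ∧
    (∀ g : List ℕ →₀ ℚ, (∀ w ∈ g.support, (0 : ℕ) ∉ w) →
      ∃ f : List ℕ →₀ ℚ, (f.sum fun w a => a • phiY w) = g) := by
  refine ⟨fun u v => ?_, fun g hg => ⟨g, sum_smul_phiY_of_zero_free hg⟩⟩
  by_cases h : 0 ∈ u ∨ 0 ∈ v
  · rw [sum_smul_phiY_of_zero_mem fun w hw => ?_]
    · rcases h with h | h <;> simp [stL, phiY_of_zero_mem h]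
    · rw [← List.count_pos_iff, count_zero_of_mem_support_bqs u v w hw]
      rcases h with h | h
      · exact Nat.add_pos_left (List.count_pos_iff.2 h) _
      · exact Nat.add_pos_right _ (List.count_pos_iff.2 h)
  obtain ⟨hu, hv⟩ := not_or.1 h
  rw [phiY_of_zero_not_mem hu, phiY_of_zero_not_mem hv, stL_single_one_single_one,
    ← bqs_eq_st u v hu hv]
  refine sum_smul_phiY_of_zero_free fun w hw => ?_
  rw [← List.count_eq_zero, count_zero_of_mem_support_bqs u v w hw,
    List.count_eq_zero.2 hu, List.count_eq_zero.2 hv]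
end

section
/- Let Π₀ : ℚ⟨B⟩ → ℚ⟨B⟩⁰ be the projection which is the identity on words not starting with b₀ and sends words starting with b₀ to 0, let θ_X^anti : ℚ⟨X⟩ → ℚ⟨B⟩ be the word-reversing map x_{ε₁}⋯x_{ε_n} ↦ b_{ε_n}⋯b_{ε₁}, let θ_Y : ℚ⟨Y⟩ → ℚ⟨B⟩ send y_{k₁}⋯y_{k_d} ↦ b_{k₁}⋯b_{k_d}, and let Π_Y : ℚ⟨X⟩ → ℚ⟨Y⟩ send words ending in x₀ to 0 and x₀^{k₁-1}x₁⋯x₀^{k_d-1}x₁ ↦ y_{k₁}⋯y_{k_d}. Then τ ∘ Π₀ ∘ θ_X^anti = θ_Y ∘ Π_Y. -/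
/-- Decompose a word (assumed not to start with `b₀`) into pairs `(k_i, m_i)` with
`w = b_{k₁} b₀^{m₁} ⋯ b_{k_d} b₀^{m_d}`. -/
def decomp : List ℕ → List (ℕ × ℕ)
  | [] => []
  | k :: t => (k, (t.takeWhile (· = 0)).length) :: decomp (t.dropWhile (· = 0))
  termination_by w => w.length
  decreasing_by
    exact Nat.lt_succ_of_le (List.Sublist.length_le (List.dropWhile_sublist _))

/-- The word `b_{k₁} b₀^{m₁} ⋯ b_{k_d} b₀^{m_d}` built from its index pairs. -/
def buildWord (l : List (ℕ × ℕ)) : List ℕ :=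
  (l.map fun p => p.1 :: List.replicate p.2 0).flatten

/-- `τ` on index pairs. -/
def tauIdx (l : List (ℕ × ℕ)) : List (ℕ × ℕ) :=
  l.reverse.map fun p => (p.2 + 1, p.1 - 1)

/-- The involution `τ` as a map on words not starting with `b₀`. -/
def tauWord (w : List ℕ) : List ℕ := buildWord (tauIdx (decomp w))

/-- Read off the `Y`-word of an `X`-word `x₀^{k₁-1}x₁ ⋯ x₀^{k_d-1}x₁` (letters `0,1`,
not ending in `x₀`): the result is `[k₁, …, k_d]`.  The auxiliary counter records the
number of `x₀`'s seen since the last `x₁`. -/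
def yOfAux : List ℕ → ℕ → List ℕ
  | [], _ => []
  | 0 :: t, c => yOfAux t (c + 1)
  | _ :: t, c => (c + 1) :: yOfAux t 0

/-- `Π_Y`-image word of an `X`-word. -/
def yOf (w : List ℕ) : List ℕ := yOfAux w 0

/-!
A `{0,1}`-word not ending in `x₀` is `x₀^{k₁-1}x₁ ⋯ x₀^{k_d-1}x₁`, which `Π_Y` sends to
`y_{k₁}⋯y_{k_d}`. Its reversal `b₁b₀^{k_d-1} ⋯ b₁b₀^{k₁-1}` has index pairs
`(1, k_d-1), …, (1, k₁-1)`, so `τ` reverses them back and turns each pair into `(k_i, 0)`,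
giving `b_{k₁}⋯b_{k_d}`. A word ending in `x₀` reverses to one starting with `b₀`, and both
sides vanish.
-/

/-- `x₀^{a₁}x₁ ⋯ x₀^{a_d}x₁` -/
def xWord (as : List ℕ) : List ℕ :=
  (as.map fun a => List.replicate a 0 ++ [1]).flatten

/-- `b₁b₀^{a₁} ⋯ b₁b₀^{a_d}` -/
def bWord (as : List ℕ) : List ℕ :=
  (as.map fun a => 1 :: List.replicate a 0).flatten

lemma yOfAux_replicate_append (as : List ℕ) (a c : ℕ) :
    yOfAux (List.replicate a 0 ++ 1 :: xWord as) c = (c + a + 1) :: yOf (xWord as) := by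
  induction a generalizing c with
  | zero => simp [yOfAux, yOf]
  | succ a ih =>
    rw [List.replicate_succ]
    simpa [yOfAux, Nat.add_assoc, Nat.add_comm 1 a] using ih (c + 1)

lemma yOf_xWord (as : List ℕ) : yOf (xWord as) = as.map (· + 1) := by
  induction as with
  | nil => simp [yOf, yOfAux, xWord]
  | cons a t ih =>
    have hcons : xWord (a :: t) = List.replicate a 0 ++ 1 :: xWord t := by simp [xWord]
    rw [hcons, yOf, yOfAux_replicate_append, ih]
    simp

lemma reverse_xWord (as : List ℕ) : (xWord as).reverse = bWord as.reverse := by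
  induction as with
  | nil => rfl
  | cons a t ih =>
    have hcons : xWord (a :: t) = (List.replicate a 0 ++ [1]) ++ xWord t := by simp [xWord]
    rw [hcons, List.reverse_append, ih]
    simp [bWord]

lemma takeWhile_bWord (as : List ℕ) : (bWord as).takeWhile (· = 0) = [] := by
  cases as <;> simp [bWord]

lemma decomp_bWord (as : List ℕ) : decomp (bWord as) = as.map fun a => (1, a) := by
  induction as with
  | nil => simp [bWord, decomp]
  | cons a t ih =>
    have hcons : bWord (a :: t) = 1 :: (List.replicate a 0 ++ bWord t) := by simp [bWord]
    have htake : (List.replicate a 0 ++ bWord t).takeWhile (· = 0) = List.replicate a 0 := by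
      simp [takeWhile_bWord]
    have hdrop : (List.replicate a 0 ++ bWord t).dropWhile (· = 0) = bWord t := by
      have := List.takeWhile_append_dropWhile (l := List.replicate a 0 ++ bWord t)
        (p := fun x => decide (x = 0))
      rw [htake] at this
      exact List.append_cancel_left this
    rw [hcons, decomp, htake, hdrop, ih]
    simp

lemma tauWord_bWord (as : List ℕ) : tauWord (bWord as) = as.reverse.map (· + 1) := by
  rw [tauWord, decomp_bWord, tauIdx, ← List.map_reverse, List.map_map]
  simp only [buildWord, List.map_map]
  induction as.reverse with
  | nil => rfl
  | cons b t ih => simpa using ih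

lemma exists_xWord_append_replicate (w : List ℕ) (hw : ∀ i ∈ w, i ≤ 1) :
    ∃ as n, w = xWord as ++ List.replicate n 0 := by
  induction w using List.reverseRecOn with
  | nil => exact ⟨[], 0, rfl⟩
  | append_singleton t i ih =>
    obtain ⟨as, n, rfl⟩ := ih fun j hj => hw j (by simp [hj])
    have hi : i ≤ 1 := hw i (by simp)
    interval_cases i
    · exact ⟨as, n + 1, by simp [List.replicate_succ']⟩
    · exact ⟨as ++ [n], 0, by simp [xWord]⟩

lemma exists_xWord (w : List ℕ) (hw : ∀ i ∈ w, i ≤ 1) (hlast : w.getLast? ≠ some 0) :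
    ∃ as, w = xWord as := by
  obtain ⟨as, n, rfl⟩ := exists_xWord_append_replicate w hw
  cases n with
  | zero => exact ⟨as, by simp⟩
  | succ n => simp [List.replicate_succ'] at hlast

/-- `τ ∘ Π₀ ∘ θ_X^anti = θ_Y ∘ Π_Y` on `ℚ⟨X⟩` (stated on the word basis; words over
`X = {x₀,x₁}` are words with letters `≤ 1`, `θ_X^anti` is word reversal, `Π₀` kills words
starting with `b₀`, `Π_Y` kills words ending in `x₀`, `θ_Y` identifies `y_k` with `b_k`). -/
theorem stmt_18 (w : List ℕ) (hw : ∀ i ∈ w, i ≤ 1) :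
    (if w.reverse.head? = some 0 then (0 : List ℕ →₀ ℚ)
      else Finsupp.single (tauWord w.reverse) 1) =
    (if w.getLast? = some 0 then (0 : List ℕ →₀ ℚ)
      else Finsupp.single (yOf w) 1) := by
  rw [List.head?_reverse]
  by_cases hlast : w.getLast? = some 0
  · simp [hlast]
  · rw [if_neg hlast, if_neg hlast]
    obtain ⟨as, rfl⟩ := exists_xWord w hw hlast
    rw [reverse_xWord, tauWord_bWord, yOf_xWord, List.reverse_reverse]
end
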